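/- Let T₁ = T₂ = (log T)^{1/2}, T₃ = (log T)^{1+γ} with γ ∈ (0,1), and T_ℓ = T^{1−1/2^{ℓ−3}} for ℓ ≥ 4, with ε_ℓ = sqrt(d·log(K T²)/T_ℓ). Then there is a constant C' (depending only on d via the bound below) such that Σ_{ℓ=5}^{B} 4·T_ℓ·ε_{ℓ−1} ≤ 4·B·sqrt(d·T·log(K T²)) for every B ≥ 5, and hence with B = O(log log T) the sum is O(log log T · sqrt(d T log(K T)}). -/
import Mathlib


theorem stmt_17 (T : ℝ) (hT : 1 < T) (d K : ℕ) (hd : 1 ≤ d) (hK : 1 ≤ K)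
    (B : ℕ) (hB : 5 ≤ B) :
    ∑ ℓ ∈ Finset.Icc 5 B,
        4 * T ^ ((1 : ℝ) - 1 / 2 ^ (ℓ - 3)) *
          Real.sqrt ((d : ℝ) * Real.log ((K : ℝ) * T ^ 2) /
            T ^ ((1 : ℝ) - 1 / 2 ^ (ℓ - 1 - 3))) ≤
      4 * (B : ℝ) * Real.sqrt ((d : ℝ) * T * Real.log ((K : ℝ) * T ^ 2)) := by
  have hT0 : (0:ℝ) < T := lt_trans one_pos hT
  set L := Real.log ((K : ℝ) * T ^ 2) with hLdef
  have hK1 : (1:ℝ) ≤ (K:ℝ) := by exact_mod_cast hK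
  have hL : 0 ≤ L := Real.log_nonneg (by nlinarith)
  have hdL : 0 ≤ (d:ℝ) * L := mul_nonneg (Nat.cast_nonneg d) hL
  have key : ∀ ℓ ∈ Finset.Icc 5 B,
      4 * T ^ ((1 : ℝ) - 1 / 2 ^ (ℓ - 3)) *
          Real.sqrt ((d : ℝ) * L / T ^ ((1 : ℝ) - 1 / 2 ^ (ℓ - 1 - 3)))
        = 4 * Real.sqrt ((d : ℝ) * T * L) := by
    intro ℓ hℓ
    obtain ⟨m, rfl⟩ := Nat.exists_eq_add_of_le (Finset.mem_Icc.mp hℓ).1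
    have h1 : 5 + m - 3 = m + 2 := by omega
    have h2 : 5 + m - 1 - 3 = m + 1 := by omega
    rw [h1, h2]
    set a : ℝ := (1 : ℝ) - 1 / 2 ^ (m + 2) with ha
    set b : ℝ := (1 : ℝ) - 1 / 2 ^ (m + 1) with hb
    have hTb : (0:ℝ) ≤ T ^ b := (Real.rpow_pos_of_pos hT0 b).le
    have hsq : Real.sqrt (T ^ b) = T ^ (b / 2) := by
      rw [Real.sqrt_eq_rpow, ← Real.rpow_mul hT0.le]
      ring_nf
    rw [Real.sqrt_div hdL, hsq]
    have habs : a - b / 2 = 1 / 2 := by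
      rw [ha, hb, pow_succ]; ring
    have hTsub : T ^ a / T ^ (b / 2) = Real.sqrt T := by
      rw [← Real.rpow_sub hT0, habs, ← Real.sqrt_eq_rpow]
    have hsplit : Real.sqrt ((d : ℝ) * T * L) = Real.sqrt ((d:ℝ) * L) * Real.sqrt T := by
      rw [show (d:ℝ) * T * L = (d:ℝ) * L * T by ring, Real.sqrt_mul hdL]
    rw [hsplit, ← hTsub]
    field_simp
  rw [Finset.sum_congr rfl key, Finset.sum_const, Nat.card_Icc]
  rw [nsmul_eq_mul]
  have hc : 0 ≤ Real.sqrt ((d : ℝ) * T * L) := Real.sqrt_nonneg _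
  have hcard : ((B + 1 - 5 : ℕ) : ℝ) ≤ (B : ℝ) := by
    have : B + 1 - 5 ≤ B := by omega
    exact_mod_cast this
  nlinarith [Real.sqrt_nonneg ((d : ℝ) * T * L)]
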